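/- arXiv:1906.11046 — 2 statements merged into one kernel-verified Lean document; each statement's English description precedes it below -/
import Mathlib

section
/- Let N ≥ 1 be an integer, τ > 0, κ > 0, T = N·τ, and X a real number. Suppose a sequence x_0, x_1, …, x_N of reals satisfies x_0 = X, x_N = 0, and the recurrence x_{k−1} − 2·x_k + x_{k+1} = 2·(cosh(κτ) − 1)·x_k for all 1 ≤ k ≤ N−1. Then x_k = X·sinh(κ·(T − kτ))/sinh(κ·T) for every 0 ≤ k ≤ N. -/
open Real

/-!
The recurrence reads `x (k - 1) + x (k + 1) = 2 cosh θ · x k` with `θ = κτ`, a second-order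
linear recurrence, so a solution is determined by its first two values. Both `k ↦ sinh (kθ)` and
`k ↦ sinh (κ (T - kτ))` solve it. The difference `d` of `x` and the claimed trajectory vanishes
at `0`, hence equals `d 1 · sinh (kθ) / sinh θ`; since `sinh (Nθ) ≠ 0`, vanishing at `N` forces
`d = 0`.
-/

def SolvesRecurrence (c : ℝ) (N : ℕ) (x : ℕ → ℝ) : Prop :=
  ∀ k, k + 2 ≤ N → x k + x (k + 2) = 2 * c * x (k + 1)

namespace SolvesRecurrence

variable {c : ℝ} {N : ℕ} {x y : ℕ → ℝ}

theorem sub (hx : SolvesRecurrence c N x) (hy : SolvesRecurrence c N y) :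
    SolvesRecurrence c N (x - y) := fun k hk => by
  simp only [Pi.sub_apply]
  linear_combination hx k hk - hy k hk

theorem eq_of_apply_zero_of_apply_one (hx : SolvesRecurrence c N x) (hy : SolvesRecurrence c N y)
    (h0 : x 0 = y 0) (h1 : x 1 = y 1) : ∀ k ≤ N, x k = y k := by
  intro k
  induction k using Nat.twoStepInduction with
  | zero => exact fun _ => h0
  | one => exact fun _ => h1
  | more k ih ih' =>
    intro hk
    linear_combination hx k hk - hy k hk - ih (by omega) + 2 * c * ih' (by omega)

end SolvesRecurrence

theorem sinh_sub_add_sinh_add (u θ : ℝ) : sinh (u - θ) + sinh (u + θ) = 2 * cosh θ * sinh u := by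
  rw [sinh_sub, sinh_add]
  ring

theorem solvesRecurrence_sinh (N : ℕ) (b a θ : ℝ) :
    SolvesRecurrence (cosh θ) N (fun k => b * sinh (a + k * θ)) := fun k _ => by
  have h := sinh_sub_add_sinh_add (a + (k + 1) * θ) θ
  push_cast
  ring_nf at h ⊢
  linear_combination b * h

theorem SolvesRecurrence.eq_zero_of_boundary {N : ℕ} {θ : ℝ} {d : ℕ → ℝ}
    (hd : SolvesRecurrence (cosh θ) N d) (hθ : θ ≠ 0) (hN : N ≠ 0) (h0 : d 0 = 0) (hdN : d N = 0) :
    ∀ k ≤ N, d k = 0 := by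
  have hsθ : sinh θ ≠ 0 := sinh_ne_zero.2 hθ
  have hd_sinh := hd.eq_of_apply_zero_of_apply_one (solvesRecurrence_sinh N (d 1 / sinh θ) 0 θ)
    (by simp [h0]) (by field_simp; simp)
  have hd1 : d 1 = 0 := by
    have hdN_sinh := hd_sinh N le_rfl
    simp only [hdN, zero_add] at hdN_sinh
    have hsN : sinh (N * θ) ≠ 0 := sinh_ne_zero.2 (mul_ne_zero (Nat.cast_ne_zero.2 hN) hθ)
    field_simp at hdN_sinh
    simpa [hsN] using hdN_sinh.symm
  intro k hk
  simpa [hd1] using hd_sinh k hk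

/-- The boundary-value problem `x_0 = X`, `x_N = 0` for the difference equation
`x_{k−1} − 2x_k + x_{k+1} = 2(cosh(κτ) − 1)·x_k` (the discrete Almgren–Chriss stationarity
condition) has the sinh trajectory `x_k = X·sinh(κ(T − kτ))/sinh(κT)` as its unique solution. -/
theorem recurrence_bvp_unique_solution (N : ℕ) (hN : 1 ≤ N) (τ κ T X : ℝ)
    (hτ : 0 < τ) (hκ : 0 < κ) (hT : T = N * τ)
    (x : ℕ → ℝ) (hx0 : x 0 = X) (hxN : x N = 0)
    (hrec : ∀ k : ℕ, 1 ≤ k → k ≤ N - 1 →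
      x (k - 1) - 2 * x k + x (k + 1) = 2 * (cosh (κ * τ) - 1) * x k) :
    ∀ k ≤ N, x k = X * sinh (κ * (T - (k : ℝ) * τ)) / sinh (κ * T) := by
  set y : ℕ → ℝ := fun k => X * sinh (κ * (T - (k : ℝ) * τ)) / sinh (κ * T)
  have hsT : sinh (κ * T) ≠ 0 := (sinh_pos_iff.2 (by subst hT; positivity)).ne'
  have hx : SolvesRecurrence (cosh (κ * τ)) N x := fun k hk => by
    have h := hrec (k + 1) (by omega) (by omega)
    simp only [Nat.add_sub_cancel, add_assoc, one_add_one_eq_two] at h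
    linear_combination h
  have hy : SolvesRecurrence (cosh (κ * τ)) N y := by
    have h := solvesRecurrence_sinh N (X / sinh (κ * T)) (κ * T) (-(κ * τ))
    rw [cosh_neg] at h
    convert h using 2 with k
    simp only [y]
    ring_nf
  have hdiff := (hx.sub hy).eq_zero_of_boundary (mul_pos hκ hτ).ne' (by omega)
    (by simp [y, hx0, hsT]) (by simp [y, hxN, hT])
  intro k hk
  exact sub_eq_zero.1 (hdiff k hk)
end

section
/- Fix T > 0 and t with 0 < t < T. The function κ ↦ sinh(κ·(T − t))/sinh(κ·T) is strictly decreasing on (0, ∞). -/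
/-!
Writing `a = T - t < b = T`, the logarithmic derivative of `κ ↦ sinh (κ a) / sinh (κ b)` is
`(g (κ a) - g (κ b)) / κ` with `g x = x coth x`, so the ratio decreases because `g` increases
on `(0, ∞)`; the latter holds since `g' x = (sinh x cosh x - x) / sinh² x` and
`sinh x cosh x ≥ sinh x > x`.
-/

open Real Set

theorem strictMonoOn_mul_cosh_div_sinh :
    StrictMonoOn (fun x : ℝ => x * cosh x / sinh x) (Ioi 0) := by
  refine strictMonoOn_of_deriv_pos (convex_Ioi 0) ?_ fun x hx => ?_
  · exact ContinuousOn.div (by fun_prop) (by fun_prop) fun x hx => (sinh_pos_iff.mpr hx).ne'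
  rw [interior_Ioi, mem_Ioi] at hx
  have hsinh : 0 < sinh x := sinh_pos_iff.mpr hx
  have hderiv := ((hasDerivAt_id' x).fun_mul (hasDerivAt_cosh x)).fun_div (hasDerivAt_sinh x)
    hsinh.ne'
  rw [hderiv.deriv]
  have hlt : x < sinh x := self_lt_sinh_iff.mpr hx
  have hcosh : 1 ≤ cosh x := one_le_cosh x
  have hpyth : cosh x ^ 2 - sinh x ^ 2 = 1 := cosh_sq_sub_sinh_sq x
  refine div_pos ?_ (by positivity)
  nlinarith [mul_le_mul_of_nonneg_left hcosh hsinh.le]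

theorem mul_cosh_mul_sinh_lt {u v : ℝ} (hu : 0 < u) (huv : u < v) :
    u * cosh u * sinh v < v * cosh v * sinh u := by
  have hmono := strictMonoOn_mul_cosh_div_sinh hu (hu.trans huv : 0 < v) huv
  rwa [div_lt_div_iff₀ (sinh_pos_iff.mpr hu) (sinh_pos_iff.mpr (hu.trans huv))] at hmono

theorem strictAntiOn_sinh_mul_div_sinh_mul {a b : ℝ} (ha : 0 < a) (hab : a < b) :
    StrictAntiOn (fun κ : ℝ => sinh (κ * a) / sinh (κ * b)) (Ioi 0) := by
  have hb : 0 < b := ha.trans hab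
  refine strictAntiOn_of_deriv_neg (convex_Ioi 0) ?_ fun κ hκ => ?_
  · exact ContinuousOn.div (by fun_prop) (by fun_prop)
      fun κ hκ => (sinh_pos_iff.mpr (mul_pos hκ hb)).ne'
  rw [interior_Ioi, mem_Ioi] at hκ
  have hsinh : 0 < sinh (κ * b) := sinh_pos_iff.mpr (mul_pos hκ hb)
  have hnum := (hasDerivAt_mul_const (x := κ) a).sinh
  have hden := (hasDerivAt_mul_const (x := κ) b).sinh
  rw [(hnum.fun_div hden hsinh.ne').deriv]
  refine div_neg_of_neg_of_pos ?_ (by positivity)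
  have key := mul_cosh_mul_sinh_lt (mul_pos hκ ha) (mul_lt_mul_of_pos_left hab hκ)
  nlinarith

theorem strictAntiOn_sinh_ratio_general (T t : ℝ) (ht : 0 < t) (htT : t < T) :
    StrictAntiOn (fun κ : ℝ => sinh (κ * (T - t)) / sinh (κ * T)) (Set.Ioi 0) :=
  strictAntiOn_sinh_mul_div_sinh_mul (sub_pos.mpr htT) (sub_lt_self T ht)

/-- For fixed `0 < t < T`, the normalized optimal remaining inventory
`κ ↦ sinh(κ(T−t))/sinh(κT)` is strictly decreasing in the urgency parameter `κ` on `(0, ∞)`. -/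
theorem strictAntiOn_sinh_ratio (T t : ℝ) (hT : 0 < T) (ht : 0 < t) (htT : t < T) :
    StrictAntiOn (fun κ : ℝ => sinh (κ * (T - t)) / sinh (κ * T)) (Set.Ioi 0) :=
  strictAntiOn_sinh_ratio_general T t ht htT
end
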